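/- arXiv:2502.02345 — 3 statements merged into one kernel-verified Lean document; each statement's English description precedes it below -/
import Mathlib

section
/- Let Ψ be symmetric positive definite p×p, J an (nC)×p matrix, and P a p×s matrix of full column rank. Define Σ = J Ψ Jᵀ and Σ_P = J P (Pᵀ Ψ⁻¹ P)⁻¹ Pᵀ Jᵀ. Then Σ − Σ_P is positive semidefinite (Σ_P ≼ Σ in the Loewner order). -/
/-!
Put `M = Pᴴ Ψ⁻¹ P`, which is positive definite because `P` is injective. The block matrix
`[[M, Pᴴ], [P, Ψ]]` has Schur complement `M - Pᴴ Ψ⁻¹ P = 0` with respect to `Ψ`, so it is positive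
semidefinite; hence so is its Schur complement `Ψ - P M⁻¹ Pᴴ` with respect to `M`. Conjugating
by `J` gives `Σ - Σ_P = J (Ψ - P M⁻¹ Pᴴ) Jᴴ ≽ 0`.
-/

open Matrix

namespace Matrix

variable {m n K : Type*} [Fintype m] [Field K]

theorem mulVec_injective_of_rank_eq_card {A : Matrix n m K} (hA : A.rank = Fintype.card m) :
    Function.Injective A.mulVec := by
  rw [mulVec_injective_iff, linearIndependent_iff_card_eq_finrank_span, ← hA,
    rank_eq_finrank_span_cols]
  rfl

variable [Fintype n] [DecidableEq m] [DecidableEq n] [PartialOrder K] [StarRing K]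
  [StarOrderedRing K]

theorem PosDef.posSemidef_sub_mul_inv_mul_conjTranspose {Ψ : Matrix n n K} (hΨ : Ψ.PosDef)
    {P : Matrix n m K} (hP : Function.Injective P.mulVec) :
    (Ψ - P * (Pᴴ * Ψ⁻¹ * P)⁻¹ * Pᴴ).PosSemidef := by
  have hM : (Pᴴ * Ψ⁻¹ * P).PosDef := hΨ.inv.conjTranspose_mul_mul_same hP
  have := hΨ.isUnit.invertible
  have := hM.isUnit.invertible
  have hblock : (fromBlocks (Pᴴ * Ψ⁻¹ * P) Pᴴ Pᴴᴴ Ψ).PosSemidef := by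
    rw [hΨ.fromBlocks₂₂, conjTranspose_conjTranspose, sub_self]
    exact .zero
  simpa only [conjTranspose_conjTranspose] using (hM.fromBlocks₁₁ Pᴴ Ψ).mp hblock

end Matrix

theorem subspace_covariance_loewner_le
    {p s nC : ℕ}
    (Ψ : Matrix (Fin p) (Fin p) ℝ) (hΨ : Ψ.PosDef)
    (J : Matrix (Fin nC) (Fin p) ℝ)
    (P : Matrix (Fin p) (Fin s) ℝ) (hP : P.rank = s) :
    (J * Ψ * Jᵀ - J * P * (Pᵀ * Ψ⁻¹ * P)⁻¹ * Pᵀ * Jᵀ).PosSemidef := by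
  have hPinj := mulVec_injective_of_rank_eq_card (hP.trans (Fintype.card_fin s).symm)
  have hconj := (hΨ.posSemidef_sub_mul_inv_mul_conjTranspose hPinj).mul_mul_conjTranspose_same J
  simpa only [conjTranspose_eq_transpose_of_trivial, Matrix.mul_sub, Matrix.sub_mul,
    Matrix.mul_assoc] using hconj
end

section
/- Let Ψ be symmetric positive definite p×p, J an (nC)×p matrix of full rank nC (with nC ≤ p), and let Σ = J Ψ Jᵀ have eigendecomposition Σ = U Λ Uᵀ with U orthogonal and Λ diagonal with decreasing entries. For s ≤ nC, let U_s consist of the first s columns of U and Λ_s the top s×s block of Λ. Then P* = Ψ Jᵀ U_s has full column rank s, and Σ_{P*} := J P* ((P*)ᵀ Ψ⁻¹ P*)⁻¹ (P*)ᵀ Jᵀ = U_s Λ_s U_sᵀ. -/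
/-!
Write `Σ = J Ψ Jᵀ` and `P = Ψ Jᵀ V`. Then `J P = Σ V`, and symmetry of `Ψ` gives `Pᵀ Ψ⁻¹ P = Vᵀ Σ V`.
For `V = U_s` the columns are orthonormal eigenvectors, so `Σ U_s = U_s Λ_s` and
`U_sᵀ Σ U_s = Λ_s`. Since `J` has full row rank, `Σ` is positive definite, so `Λ_s` is as well
and is invertible. Hence `Σ_P = U_s Λ_s Λ_s⁻¹ Λ_s U_sᵀ = U_s Λ_s U_sᵀ`, and `P` has rank `s`
because its Gram matrix `Pᵀ Ψ⁻¹ P = Λ_s` does.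
-/

open Matrix

namespace Matrix

section
variable {R : Type*} [CommRing R] {l m n : Type*} [Fintype n]

theorem mulVec_injective_of_mul_eq_one [Fintype m] [DecidableEq n] {A : Matrix m n R}
    {B : Matrix n m R} (h : B * A = 1) : Function.Injective A.mulVec := fun x y hxy => by
  simpa [mulVec_mulVec, h] using congrArg (B *ᵥ ·) hxy

theorem mul_eq_mul_diagonal_of_eq_mul_diagonal_mul_transpose [DecidableEq n]
    {S : Matrix n n R} {U : Matrix n n R} {d : n → R}
    (hU : Uᵀ * U = 1) (hS : S = U * diagonal d * Uᵀ) : S * U = U * diagonal d := by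
  rw [hS, Matrix.mul_assoc, hU, Matrix.mul_one]

theorem mul_submatrix_eq_submatrix_mul_diagonal [Fintype m] [DecidableEq m] [Fintype l]
    [DecidableEq l] {S : Matrix n n R} {U : Matrix n m R} {d : m → R}
    (hSU : S * U = U * diagonal d) (e : l → m) :
    S * U.submatrix id e = U.submatrix id e * diagonal (d ∘ e) := by
  ext i j
  have := congrFun (congrFun hSU i) (e j)
  rw [mul_diagonal] at this
  rw [mul_diagonal]
  simpa only [mul_apply, submatrix_apply, id, Function.comp_apply] using this

theorem transpose_mul_submatrix_self [DecidableEq m] [DecidableEq l] {U : Matrix n m R}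
    (hU : Uᵀ * U = 1) {e : l → m} (he : Function.Injective e) :
    (U.submatrix id e)ᵀ * U.submatrix id e = 1 := by
  rw [transpose_submatrix, ← submatrix_mul Uᵀ U e id e Function.bijective_id, hU,
    submatrix_one _ he]

theorem transpose_mul_mul_self_of_mul_eq_mul_diagonal [Fintype m] [DecidableEq m]
    {S : Matrix n n R} {V : Matrix n m R} {w : m → R} (hV : Vᵀ * V = 1)
    (hSV : S * V = V * diagonal w) : Vᵀ * S * V = diagonal w := by
  rw [Matrix.mul_assoc, hSV, ← Matrix.mul_assoc, hV, Matrix.one_mul]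

theorem transpose_mul_inv_mul_self_eq [DecidableEq n] [Fintype m] {Ψ : Matrix n n R}
    (hΨ : Ψᵀ = Ψ) (hΨu : IsUnit Ψ.det) (J : Matrix m n R) (V : Matrix m l R) :
    (Ψ * Jᵀ * V)ᵀ * Ψ⁻¹ * (Ψ * Jᵀ * V) = Vᵀ * (J * Ψ * Jᵀ) * V := by
  simp only [transpose_mul, transpose_transpose, hΨ, Matrix.mul_assoc,
    mul_nonsing_inv_cancel_left _ _ hΨu]

theorem mul_mul_inv_mul_transpose_eq_of_mul_eq_mul_diagonal [DecidableEq n] [Fintype m]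
    [Fintype l] [DecidableEq l] {Ψ : Matrix n n R} {J : Matrix m n R}
    {V : Matrix m l R} {w : l → R} (hSV : J * Ψ * Jᵀ * V = V * diagonal w)
    (hw : IsUnit (diagonal w).det) :
    J * (Ψ * Jᵀ * V) * (diagonal w)⁻¹ * (Ψ * Jᵀ * V)ᵀ * Jᵀ = V * diagonal w * Vᵀ := by
  have hJP : J * (Ψ * Jᵀ * V) = V * diagonal w := by
    rw [← hSV, Matrix.mul_assoc, Matrix.mul_assoc, Matrix.mul_assoc]
  have hPJ : (Ψ * Jᵀ * V)ᵀ * Jᵀ = diagonal w * Vᵀ := by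
    rw [← transpose_mul, hJP, transpose_mul, diagonal_transpose]
  rw [hJP, Matrix.mul_assoc _ _ Jᵀ, hPJ, Matrix.mul_assoc V, mul_nonsing_inv _ hw, Matrix.mul_one,
    Matrix.mul_assoc]

end

theorem rank_eq_card_of_isUnit_transpose_mul_mul_self {K : Type*} [Field K] {m k : Type*}
    [Fintype m] [Fintype k] [DecidableEq k] {P : Matrix m k K} {M : Matrix m m K}
    (h : IsUnit (Pᵀ * M * P)) : P.rank = Fintype.card k :=
  le_antisymm P.rank_le_card_width <| by
    simpa [rank_of_isUnit _ h] using rank_mul_le_right (Pᵀ * M) P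

theorem PosDef.mul_mul_transpose_of_rank_eq {m n : Type*} [Fintype m] [Fintype n]
    {Ψ : Matrix n n ℝ} (hΨ : Ψ.PosDef) {J : Matrix m n ℝ} (hJ : J.rank = Fintype.card m) :
    (J * Ψ * Jᵀ).PosDef := by
  have hrows : LinearIndependent ℝ J.row :=
    linearIndependent_iff_card_eq_finrank_span.mpr (hJ ▸ rank_eq_finrank_span_row J)
  simpa using hΨ.mul_mul_conjTranspose_same (vecMul_injective_iff.mpr hrows)

end Matrix

theorem optimal_subspace_model_general
    {p s nC : ℕ} (hs : s ≤ nC)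
    (Ψ : Matrix (Fin p) (Fin p) ℝ) (hΨ : Ψ.PosDef)
    (J : Matrix (Fin nC) (Fin p) ℝ) (hJ : J.rank = nC)
    (U : Matrix (Fin nC) (Fin nC) ℝ) (d : Fin nC → ℝ)
    (hU : Uᵀ * U = 1 ∧ U * Uᵀ = 1)
    (hSpec : J * Ψ * Jᵀ = U * Matrix.diagonal d * Uᵀ) :
    (Ψ * Jᵀ * U.submatrix id (Fin.castLE hs)).rank = s ∧
    J * (Ψ * Jᵀ * U.submatrix id (Fin.castLE hs)) *
        ((Ψ * Jᵀ * U.submatrix id (Fin.castLE hs))ᵀ * Ψ⁻¹ *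
          (Ψ * Jᵀ * U.submatrix id (Fin.castLE hs)))⁻¹ *
        (Ψ * Jᵀ * U.submatrix id (Fin.castLE hs))ᵀ * Jᵀ
      = U.submatrix id (Fin.castLE hs) * Matrix.diagonal (d ∘ Fin.castLE hs) *
          (U.submatrix id (Fin.castLE hs))ᵀ := by
  set Us := U.submatrix id (Fin.castLE hs)
  have hCov : (J * Ψ * Jᵀ).PosDef := hΨ.mul_mul_transpose_of_rank_eq (by simpa using hJ)
  have hUs : Usᵀ * Us = 1 := transpose_mul_submatrix_self hU.1 (Fin.castLE_injective hs)
  have hCovUs : J * Ψ * Jᵀ * Us = Us * diagonal (d ∘ Fin.castLE hs) :=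
    mul_submatrix_eq_submatrix_mul_diagonal
      (mul_eq_mul_diagonal_of_eq_mul_diagonal_mul_transpose hU.1 hSpec) _
  have hGram : Usᵀ * (J * Ψ * Jᵀ) * Us = diagonal (d ∘ Fin.castLE hs) :=
    transpose_mul_mul_self_of_mul_eq_mul_diagonal hUs hCovUs
  have hΛ : (diagonal (d ∘ Fin.castLE hs)).PosDef := by
    simpa [hGram] using hCov.conjTranspose_mul_mul_same (mulVec_injective_of_mul_eq_one hUs)
  have hΨt : Ψᵀ = Ψ := by simpa using hΨ.isHermitian.eq
  have hGramP : (Ψ * Jᵀ * Us)ᵀ * Ψ⁻¹ * (Ψ * Jᵀ * Us) = diagonal (d ∘ Fin.castLE hs) := by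
    rw [transpose_mul_inv_mul_self_eq hΨt hΨ.det_pos.ne'.isUnit, hGram]
  refine ⟨?_, ?_⟩
  · exact (rank_eq_card_of_isUnit_transpose_mul_mul_self (hGramP ▸ hΛ.isUnit)).trans
      (Fintype.card_fin s)
  · rw [hGramP]
    exact mul_mul_inv_mul_transpose_eq_of_mul_eq_mul_diagonal hCovUs hΛ.det_pos.ne'.isUnit

theorem optimal_subspace_model
    {p s nC : ℕ} (hnCp : nC ≤ p) (hs : s ≤ nC)
    (Ψ : Matrix (Fin p) (Fin p) ℝ) (hΨ : Ψ.PosDef)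
    (J : Matrix (Fin nC) (Fin p) ℝ) (hJ : J.rank = nC)
    (U : Matrix (Fin nC) (Fin nC) ℝ) (d : Fin nC → ℝ)
    (hU : Uᵀ * U = 1 ∧ U * Uᵀ = 1)
    (hd : ∀ i j : Fin nC, i ≤ j → d j ≤ d i)
    (hSpec : J * Ψ * Jᵀ = U * Matrix.diagonal d * Uᵀ) :
    (Ψ * Jᵀ * U.submatrix id (Fin.castLE hs)).rank = s ∧
    J * (Ψ * Jᵀ * U.submatrix id (Fin.castLE hs)) *
        ((Ψ * Jᵀ * U.submatrix id (Fin.castLE hs))ᵀ * Ψ⁻¹ *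
          (Ψ * Jᵀ * U.submatrix id (Fin.castLE hs)))⁻¹ *
        (Ψ * Jᵀ * U.submatrix id (Fin.castLE hs))ᵀ * Jᵀ
      = U.submatrix id (Fin.castLE hs) * Matrix.diagonal (d ∘ Fin.castLE hs) *
          (U.submatrix id (Fin.castLE hs))ᵀ :=
  optimal_subspace_model_general hs Ψ hΨ J hJ U d hU hSpec
end

section
/- Let Σ be a symmetric positive semidefinite n×n real matrix with eigendecomposition Σ = U Λ Uᵀ, where the diagonal entries of Λ are in decreasing order. For s ≤ n, the truncation U_s Λ_s U_sᵀ (keeping the s largest eigenvalues and corresponding eigenvectors) minimizes ‖A − Σ‖_F over all n×n matrices A with rank A ≤ s. -/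
open Matrix

/-- Frobenius norm of a real matrix. -/
noncomputable def frobNorm {m n : ℕ} (A : Matrix (Fin m) (Fin n) ℝ) : ℝ :=
  Real.sqrt (∑ i, ∑ j, (A i j) ^ 2)

/-!
Conjugating by `U` replaces `A` by `B = Uᵀ A U` and `S` by `D = diag d`. Since `rank B ≤ s`, the
kernel of `B` contains orthonormal vectors `v₁, …, v_{n-s}`, and Bessel's inequality applied to the
rows of `B - D` gives `‖B - D‖² ≥ ∑ⱼ ‖(B - D) vⱼ‖² = ∑ⱼ ‖D vⱼ‖² = ∑ᵢ dᵢ² rᵢ`, where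
`rᵢ = ∑ⱼ vⱼ(i)²`. These weights satisfy `0 ≤ rᵢ ≤ 1` and `∑ᵢ rᵢ = n - s`, and as `d ≥ 0` the
squares `dᵢ²` decrease, so the weighted sum is at least the sum of the `n - s` last `dᵢ²`: the
squared error of the truncation.
-/

open Finset

lemma frobNorm_sq {m n : ℕ} (A : Matrix (Fin m) (Fin n) ℝ) :
    frobNorm A ^ 2 = ∑ i, ∑ j, A i j ^ 2 :=
  Real.sq_sqrt (by positivity)

lemma frobNorm_eq_sqrt_trace {m n : ℕ} (A : Matrix (Fin m) (Fin n) ℝ) :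
    frobNorm A = √(Aᵀ * A).trace := by
  simp only [frobNorm, trace, Matrix.diag, mul_apply, transpose_apply, sq]
  rw [sum_comm]

lemma frobNorm_mul_mul_transpose {m n : ℕ} {U : Matrix (Fin m) (Fin n) ℝ} (hU : Uᵀ * U = 1)
    (M : Matrix (Fin n) (Fin n) ℝ) : frobNorm (U * M * Uᵀ) = frobNorm M := by
  have hconj : (U * M * Uᵀ)ᵀ * (U * M * Uᵀ) = U * (Mᵀ * M) * Uᵀ := by
    simp only [transpose_mul, transpose_transpose, Matrix.mul_assoc]
    rw [← Matrix.mul_assoc Uᵀ U, hU, Matrix.one_mul]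
  rw [frobNorm_eq_sqrt_trace, frobNorm_eq_sqrt_trace, hconj, trace_mul_cycle, hU, Matrix.one_mul]

lemma frobNorm_diagonal_sq {n : ℕ} (x : Fin n → ℝ) : frobNorm (diagonal x) ^ 2 = ∑ i, x i ^ 2 := by
  rw [frobNorm_sq]
  refine sum_congr rfl fun i _ => ?_
  rw [Fintype.sum_eq_single i fun j hj => by simp [diagonal_apply_ne _ (Ne.symm hj)]]
  simp

lemma sum_sq_mulVec_le_frobNorm_sq {ι : Type*} [Fintype ι] {m n : ℕ}
    (M : Matrix (Fin m) (Fin n) ℝ) {v : ι → EuclideanSpace ℝ (Fin n)} (hv : Orthonormal ℝ v) :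
    ∑ j, ∑ i, (M *ᵥ v j) i ^ 2 ≤ frobNorm M ^ 2 := by
  rw [frobNorm_sq, sum_comm]
  refine sum_le_sum fun i _ => ?_
  have := hv.sum_inner_products_le (WithLp.toLp 2 (M i)) (s := univ)
  simpa [EuclideanSpace.real_norm_sq_eq, PiLp.inner_apply, mulVec, dotProduct, mul_comm] using this

lemma Orthonormal.sum_sq_apply_le_one {ι n : Type*} [Fintype ι] [Fintype n] [DecidableEq n]
    {v : ι → EuclideanSpace ℝ n} (hv : Orthonormal ℝ v) (i : n) : ∑ j, v j i ^ 2 ≤ 1 := by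
  simpa [EuclideanSpace.inner_single_right] using
    hv.sum_inner_products_le (EuclideanSpace.single i (1 : ℝ)) (s := univ)

lemma Orthonormal.sum_sum_sq_apply {ι n : Type*} [Fintype ι] [Fintype n]
    {v : ι → EuclideanSpace ℝ n} (hv : Orthonormal ℝ v) :
    ∑ i, ∑ j, v j i ^ 2 = Fintype.card ι := by
  rw [sum_comm]
  simp [← EuclideanSpace.real_norm_sq_eq, hv.1]

lemma exists_orthonormal_mulVec_eq_zero {m n : Type*} [Fintype m] [Fintype n] [DecidableEq n]
    {k : ℕ} (B : Matrix m n ℝ) (hk : B.rank + k ≤ Fintype.card n) :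
    ∃ v : Fin k → EuclideanSpace ℝ n, Orthonormal ℝ v ∧ ∀ j, B *ᵥ v j = 0 := by
  set K := LinearMap.ker (toLpLin 2 2 B)
  have hK : k ≤ Module.finrank ℝ K := by
    have := (toLpLin 2 2 B).finrank_range_add_finrank_ker
    rw [rank_eq_finrank_range_toLin B (PiLp.basisFun 2 ℝ m) (PiLp.basisFun 2 ℝ n)] at hk
    rw [finrank_euclideanSpace] at this
    exact le_of_add_le_add_left (this ▸ hk)
  let b := stdOrthonormalBasis ℝ K
  refine ⟨fun j => b (Fin.castLE hK j), ?_, fun j => ?_⟩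
  · exact (b.orthonormal.comp _ (Fin.castLE_injective hK)).comp_linearIsometry K.subtypeₗᵢ
  · exact congrArg WithLp.ofLp (LinearMap.mem_ker.1 (b (Fin.castLE hK j)).2)

lemma sum_le_sum_mul_of_threshold {ι : Type*} [Fintype ι] (T : Finset ι) {c r : ι → ℝ} (t : ℝ)
    (hT : ∀ i ∈ T, c i ≤ t) (hTc : ∀ i ∉ T, t ≤ c i) (hr0 : ∀ i, 0 ≤ r i) (hr1 : ∀ i, r i ≤ 1)
    (hr : ∑ i, r i = #T) :
    ∑ i ∈ T, c i ≤ ∑ i, c i * r i := by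
  classical
  -- termwise `(c i - t) * (r i - 𝟙_T i) ≥ 0`, and the `t`-terms add up to `t * (∑ r - #T) = 0`
  have hterm (i : ι) :
      t * r i - (if i ∈ T then t else 0) ≤ c i * r i - (if i ∈ T then c i else 0) := by
    by_cases hi : i ∈ T
    · simp only [hi, if_true]; nlinarith [hT i hi, hr1 i]
    · simp only [hi, if_false, sub_zero]; nlinarith [hTc i hi, hr0 i]
  have ht : ∑ i, (t * r i - (if i ∈ T then t else 0)) = 0 := by
    rw [sum_sub_distrib, ← mul_sum, hr, ← sum_filter]; simp [mul_comm]
  have := sum_le_sum fun i (_ : i ∈ univ) => hterm i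
  rw [ht, sum_sub_distrib, ← sum_filter] at this
  simpa using this

lemma sum_compl_map_castLEEmb_le_sum_mul {n s : ℕ} (hs : s ≤ n) {c r : Fin n → ℝ}
    (hc : Antitone c) (hc0 : 0 ≤ c) (hr0 : ∀ i, 0 ≤ r i) (hr1 : ∀ i, r i ≤ 1)
    (hr : ∑ i, r i = (n - s : ℕ)) :
    ∑ i ∈ (univ.map (Fin.castLEEmb hs))ᶜ, c i ≤ ∑ i, c i * r i := by
  have hmem (i : Fin n) : i ∈ univ.map (Fin.castLEEmb hs) ↔ (i : ℕ) < s := by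
    simp only [mem_map, mem_univ, true_and, Fin.castLEEmb_apply]
    exact ⟨by rintro ⟨j, rfl⟩; exact j.2, fun h => ⟨⟨i, h⟩, rfl⟩⟩
  refine sum_le_sum_mul_of_threshold _ (if h : s < n then c ⟨s, h⟩ else 0) ?_ ?_ hr0 hr1 ?_
  · intro i hi
    have hsi : s ≤ i := by simpa [hmem] using hi
    rw [dif_pos (hsi.trans_lt i.2)]
    exact hc (Fin.mk_le_of_le_val hsi)
  · intro i hi
    have his : (i : ℕ) < s := by simpa [hmem] using hi
    split_ifs with h
    · exact hc (Fin.le_def.2 his.le)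
    · exact hc0 i
  · rw [hr, card_compl, card_map]; simp

lemma submatrix_mul_diagonal_mul_transpose {R m n o : Type*} [CommSemiring R] [Fintype n]
    [Fintype o] [DecidableEq n] [DecidableEq o] (U : Matrix m n R) (f : o ↪ n) (d : n → R) :
    U.submatrix id f * diagonal (d ∘ f) * (U.submatrix id f)ᵀ
      = U * diagonal (fun i => if i ∈ univ.map f then d i else 0) * Uᵀ := by
  ext i j
  rw [mul_apply, mul_apply]
  simp only [mul_diagonal, transpose_apply, submatrix_apply, id, Function.comp_apply,
    mul_ite, ite_mul, mul_zero, zero_mul]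
  rw [sum_ite_mem, univ_inter, sum_map]

lemma Matrix.PosSemidef.nonneg_of_eq_mul_diagonal_mul_transpose {n : Type*} [Fintype n]
    [DecidableEq n] {S U : Matrix n n ℝ} {d : n → ℝ} (hS : S.PosSemidef) (hU : Uᵀ * U = 1)
    (hSpec : S = U * diagonal d * Uᵀ) : 0 ≤ d := by
  have hD : Uᵀ * S * U = diagonal d := by
    rw [hSpec, ← Matrix.mul_assoc, ← Matrix.mul_assoc, hU, Matrix.one_mul, Matrix.mul_assoc, hU,
      Matrix.mul_one]
  have := hS.conjTranspose_mul_mul_same U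
  rw [conjTranspose_eq_transpose_of_trivial, hD, posSemidef_diagonal_iff] at this
  exact this

lemma frobNorm_submatrix_mul_diagonal_mul_transpose_sub_sq {n s : ℕ} {U : Matrix (Fin n) (Fin n) ℝ} (hU : Uᵀ * U = 1)
    (f : Fin s ↪ Fin n) (d : Fin n → ℝ) :
    frobNorm (U.submatrix id f * diagonal (d ∘ f) * (U.submatrix id f)ᵀ - U * diagonal d * Uᵀ) ^ 2
      = ∑ i ∈ (univ.map f)ᶜ, d i ^ 2 := by
  rw [submatrix_mul_diagonal_mul_transpose, ← Matrix.sub_mul, ← Matrix.mul_sub, diagonal_sub,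
    frobNorm_mul_mul_transpose hU, frobNorm_diagonal_sq, ← univ_inter (univ.map f)ᶜ, ← sum_ite_mem]
  refine sum_congr rfl fun i _ => ?_
  by_cases hi : i ∈ univ.map f <;> simp [hi]

theorem eckart_young_mirsky_psd
    {n s : ℕ} (hs : s ≤ n)
    (S : Matrix (Fin n) (Fin n) ℝ) (hS : S.PosSemidef)
    (U : Matrix (Fin n) (Fin n) ℝ) (d : Fin n → ℝ)
    (hU : Uᵀ * U = 1 ∧ U * Uᵀ = 1)
    (hd : ∀ i j : Fin n, i ≤ j → d j ≤ d i)
    (hSpec : S = U * Matrix.diagonal d * Uᵀ) :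
    ∀ A : Matrix (Fin n) (Fin n) ℝ, A.rank ≤ s →
      frobNorm (U.submatrix id (Fin.castLE hs) * Matrix.diagonal (d ∘ Fin.castLE hs) *
          (U.submatrix id (Fin.castLE hs))ᵀ - S)
        ≤ frobNorm (A - S) := by
  intro A hA
  obtain ⟨hUtU, hUUt⟩ := hU
  have hd0 : 0 ≤ d := hS.nonneg_of_eq_mul_diagonal_mul_transpose hUtU hSpec
  subst hSpec
  set B := Uᵀ * A * U
  have hB : B.rank + (n - s) ≤ Fintype.card (Fin n) := by
    have : B.rank ≤ A.rank := (rank_mul_le_left _ _).trans (rank_mul_le_right _ _)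
    simp only [Fintype.card_fin]; omega
  obtain ⟨v, hv, hBv⟩ := exists_orthonormal_mulVec_eq_zero B hB
  have hAS : A - U * diagonal d * Uᵀ = U * (B - diagonal d) * Uᵀ := by
    simp only [B, Matrix.mul_sub, Matrix.sub_mul, ← Matrix.mul_assoc, hUUt, Matrix.one_mul]
    simp only [Matrix.mul_assoc, hUUt, Matrix.mul_one]
  have hsq_anti : Antitone (fun i => d i ^ 2) := fun i j hij =>
    pow_le_pow_left₀ (hd0 j) (hd i j hij) 2
  refine (pow_le_pow_iff_left₀ (Real.sqrt_nonneg _) (Real.sqrt_nonneg _) two_ne_zero).1 ?_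
  calc _ = ∑ i ∈ (univ.map (Fin.castLEEmb hs))ᶜ, d i ^ 2 :=
        frobNorm_submatrix_mul_diagonal_mul_transpose_sub_sq hUtU _ d
    _ ≤ ∑ i, d i ^ 2 * ∑ j, v j i ^ 2 :=
      sum_compl_map_castLEEmb_le_sum_mul hs hsq_anti (fun i => sq_nonneg _)
        (fun i => sum_nonneg fun j _ => sq_nonneg _) hv.sum_sq_apply_le_one
        (by rw [hv.sum_sum_sq_apply, Fintype.card_fin])
    _ = ∑ j, ∑ i, ((B - diagonal d) *ᵥ v j) i ^ 2 := by
      simp only [sub_mulVec, hBv, zero_sub, Pi.neg_apply, neg_sq, mulVec_diagonal, mul_pow,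
        mul_sum]
      exact sum_comm
    _ ≤ frobNorm (B - diagonal d) ^ 2 := sum_sq_mulVec_le_frobNorm_sq _ hv
    _ = frobNorm (A - U * diagonal d * Uᵀ) ^ 2 := by rw [hAS, frobNorm_mul_mul_transpose hUtU]
end
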